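/- Pathwise for every t ∈ ℕ: g(S_t) ≤ Y_t ≤ 𝒢(S_t) and max_{s ≤ t} Y_s = 𝒢(S_t); moreover, on the event {M_t > 0}, 𝒢(M_t) ≤ Y_t. -/

import Mathlib

/-!
With `H s = ∫_s^∞ g x / x² dx`, the substitution `x = s / u` gives `𝒢 s = s H s`, hence
`𝒢 s = s 𝒢′ s + g s` and `Y_t = M_t 𝒢′(S_t) + g(S_t)`. Monotonicity of `g` gives `𝒢′ ≥ 0`, which
yields `g(S_t) ≤ Y_t ≤ 𝒢(S_t)` as `0 ≤ M_t ≤ S_t`. Splitting `∫_m^∞ (g x - g s) / x² dx` at `s`,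
where the integrand is `≤ 0` on `(m, s]`, shows `𝒢 m ≤ 𝒢 s - (s - m) 𝒢′ s`: this is `𝒢(M_t) ≤ Y_t`, and it also makes `𝒢`
nondecreasing. Finally `Y = 𝒢(S)` whenever `M` is at its running maximum, so the running maximum
of `Y` is `𝒢(S_t)`.
-/

open MeasureTheory Filter Set

/-- The running maximum `S t = max_{s ≤ t} M s`. -/
noncomputable def runMax {Ω : Type*} (M : ℕ → Ω → ℝ) (t : ℕ) (ω : Ω) : ℝ :=
  (Finset.range (t + 1)).sup' (Finset.nonempty_range_iff.mpr (Nat.succ_ne_zero t))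
    (fun s => M s ω)

/-- The ultimate supremum `S_∞ = sup_t M_t`. -/
noncomputable def supAll {Ω : Type*} (M : ℕ → Ω → ℝ) (ω : Ω) : ℝ :=
  ⨆ t : ℕ, M t ω

/-- `𝒢 s = ∫_0^1 g(s/u) du`. -/
noncomputable def calG (g : ℝ → ℝ) (s : ℝ) : ℝ :=
  ∫ u in Set.Ioc (0 : ℝ) 1, g (s / u)

/-- `𝒢′ s = ∫_s^∞ (g(x) − g(s))/x² dx`. -/
noncomputable def calG' (g : ℝ → ℝ) (s : ℝ) : ℝ :=
  ∫ x in Set.Ioi s, (g x - g s) / x ^ 2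

/-- The Azéma–Yor process `Y t = 𝒢(S t) − (S t − M t)·𝒢′(S t)`. -/
noncomputable def ayProc {Ω : Type*} (g : ℝ → ℝ) (M : ℕ → Ω → ℝ) (t : ℕ) (ω : Ω) : ℝ :=
  calG g (runMax M t ω) - (runMax M t ω - M t ω) * calG' g (runMax M t ω)

section CalG

variable {g : ℝ → ℝ} {a s : ℝ}

lemma image_div_Ioo_zero_one (hs : 0 < s) : (s / ·) '' Ioo (0 : ℝ) 1 = Ioi s := by
  ext x
  constructor
  · rintro ⟨u, ⟨hu0, hu1⟩, rfl⟩
    exact (lt_div_iff₀ hu0).mpr (by nlinarith)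
  · intro (hx : s < x)
    have hx0 : 0 < x := hs.trans hx
    exact ⟨s / x, ⟨div_pos hs hx0, (div_lt_one hx0).mpr hx⟩, by field_simp⟩

lemma calG_eq_mul_setIntegral (hs : 0 < s) :
    calG g s = s * ∫ x in Ioi s, g x / x ^ 2 := by
  have hderiv : ∀ u ∈ Ioo (0 : ℝ) 1, HasDerivWithinAt (s / ·) (-s / u ^ 2) (Ioo 0 1) u :=
    fun u hu => by
      simpa [div_eq_mul_inv, neg_div, mul_comm] using
        ((hasDerivAt_inv hu.1.ne').const_mul s).hasDerivWithinAt
  have hinj : InjOn (s / ·) (Ioo (0 : ℝ) 1) :=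
    ((mul_right_injective₀ hs.ne').comp inv_injective).injOn
  have key := integral_image_eq_integral_abs_deriv_smul measurableSet_Ioo hderiv hinj
    (fun x => g x / x ^ 2)
  rw [image_div_Ioo_zero_one hs] at key
  rw [key, calG, integral_Ioc_eq_integral_Ioo, ← integral_const_mul]
  refine setIntegral_congr_fun measurableSet_Ioo fun u hu => ?_
  rw [neg_div, abs_neg, abs_of_pos (by have := hu.1; positivity), smul_eq_mul]
  field_simp [hu.1.ne']

lemma integrableOn_Ioi_div_sq (ha : 0 < a) (c : ℝ) :
    IntegrableOn (fun x : ℝ => c / x ^ 2) (Ioi a) := by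
  refine IntegrableOn.congr_fun
    ((integrableOn_Ioi_rpow_of_lt (by norm_num : (-2 : ℝ) < -1) ha).const_mul c)
    (fun x (hx : a < x) => ?_) measurableSet_Ioi
  rw [Real.rpow_neg (ha.trans hx).le, Real.rpow_two, div_eq_mul_inv]

lemma integral_Ioi_div_sq (ha : 0 < a) (c : ℝ) :
    ∫ x in Ioi a, c / x ^ 2 = c / a := by
  have hrpow : ∫ x in Ioi a, c / x ^ 2 = c * ∫ x in Ioi a, x ^ (-2 : ℝ) := by
    rw [← integral_const_mul]
    refine setIntegral_congr_fun measurableSet_Ioi fun x (hx : a < x) => ?_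
    rw [Real.rpow_neg (ha.trans hx).le, Real.rpow_two, div_eq_mul_inv]
  rw [hrpow, integral_Ioi_rpow_of_lt (by norm_num) ha, show (-2 : ℝ) + 1 = -1 by norm_num,
    Real.rpow_neg_one]
  field_simp

lemma calG_eq_mul_integral_sub_add (ha : 0 < a)
    (hint : IntegrableOn (fun x => g x / x ^ 2) (Ioi a)) (c : ℝ) :
    calG g a = a * (∫ x in Ioi a, (g x - c) / x ^ 2) + c := by
  simp_rw [sub_div]
  rw [integral_sub hint (integrableOn_Ioi_div_sq ha c), integral_Ioi_div_sq ha,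
    calG_eq_mul_setIntegral ha]
  field_simp
  ring

lemma calG_eq_mul_calG'_add (ha : 0 < a) (hint : IntegrableOn (fun x => g x / x ^ 2) (Ioi a)) :
    calG g a = a * calG' g a + g a :=
  calG_eq_mul_integral_sub_add ha hint (g a)

lemma calG'_nonneg (hmono : MonotoneOn g (Ioi 0)) (hs : 0 < s) : 0 ≤ calG' g s :=
  setIntegral_nonneg measurableSet_Ioi fun x (hx : s < x) =>
    div_nonneg (sub_nonneg.mpr (hmono hs (hs.trans hx) hx.le)) (sq_nonneg x)

end CalG

/-- `𝒢′` is the derivative of the concave function `𝒢`, so `azemaYorFun g m s` is the tangent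
line of `𝒢` at `s`, evaluated at `m`. -/
noncomputable def azemaYorFun (g : ℝ → ℝ) (m s : ℝ) : ℝ :=
  calG g s - (s - m) * calG' g s

section AzemaYorFun

variable {g : ℝ → ℝ} {m s : ℝ}

lemma azemaYorFun_self (g : ℝ → ℝ) (s : ℝ) : azemaYorFun g s s = calG g s := by
  simp [azemaYorFun]

lemma azemaYorFun_le_calG (hmono : MonotoneOn g (Ioi 0)) (hs : 0 < s) (hms : m ≤ s) :
    azemaYorFun g m s ≤ calG g s :=
  sub_le_self _ (mul_nonneg (sub_nonneg.mpr hms) (calG'_nonneg hmono hs))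

lemma azemaYorFun_eq_mul_calG'_add (hs : 0 < s)
    (hint : IntegrableOn (fun x => g x / x ^ 2) (Ioi s)) :
    azemaYorFun g m s = m * calG' g s + g s := by
  rw [azemaYorFun, calG_eq_mul_calG'_add hs hint]
  ring

lemma le_azemaYorFun (hmono : MonotoneOn g (Ioi 0)) (hm : 0 ≤ m) (hs : 0 < s)
    (hint : IntegrableOn (fun x => g x / x ^ 2) (Ioi s)) :
    g s ≤ azemaYorFun g m s := by
  rw [azemaYorFun_eq_mul_calG'_add hs hint]
  exact le_add_of_nonneg_left (mul_nonneg hm (calG'_nonneg hmono hs))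

lemma calG_le_azemaYorFun (hmono : MonotoneOn g (Ioi 0)) (hm : 0 < m) (hms : m ≤ s)
    (hint : IntegrableOn (fun x => g x / x ^ 2) (Ioi m)) :
    calG g m ≤ azemaYorFun g m s := by
  have hs : 0 < s := hm.trans_le hms
  set f : ℝ → ℝ := fun x => (g x - g s) / x ^ 2
  have hf : IntegrableOn f (Ioi m) := by
    simp_rw [f, sub_div]
    exact hint.sub (integrableOn_Ioi_div_sq hm _)
  have hf_nonpos : ∫ x in Ioc m s, f x ≤ 0 :=
    setIntegral_nonpos measurableSet_Ioc fun x hx =>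
      div_nonpos_of_nonpos_of_nonneg
        (sub_nonpos.mpr (hmono (hm.trans hx.1) hs hx.2)) (sq_nonneg x)
  have hsplit : ∫ x in Ioi m, f x = (∫ x in Ioc m s, f x) + calG' g s := by
    rw [← Ioc_union_Ioi_eq_Ioi hms]
    exact setIntegral_union (Ioc_disjoint_Ioi le_rfl) measurableSet_Ioi
      (hf.mono_set Ioc_subset_Ioi_self) (hf.mono_set (Ioi_subset_Ioi hms))
  rw [calG_eq_mul_integral_sub_add hm hint (g s), hsplit,
    azemaYorFun_eq_mul_calG'_add hs (hint.mono_set (Ioi_subset_Ioi hms))]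
  linarith [mul_nonpos_of_nonneg_of_nonpos hm.le hf_nonpos]

lemma calG_monotoneOn (hmono : MonotoneOn g (Ioi 0))
    (hint : ∀ a ∈ Ioi (0 : ℝ), IntegrableOn (fun x => g x / x ^ 2) (Ioi a)) :
    MonotoneOn (calG g) (Ioi 0) := fun m hm _ hs hms =>
  (calG_le_azemaYorFun hmono hm hms (hint m hm)).trans (azemaYorFun_le_calG hmono hs hms)

end AzemaYorFun

section RunMax

variable {Ω : Type*} {M : ℕ → Ω → ℝ} {s t : ℕ} {ω : Ω}

lemma le_runMax (hst : s ≤ t) : M s ω ≤ runMax M t ω :=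
  Finset.le_sup' (fun i => M i ω) (Finset.mem_range.mpr (Nat.lt_succ_of_le hst))

lemma runMax_le_iff {c : ℝ} : runMax M t ω ≤ c ↔ ∀ i ≤ t, M i ω ≤ c := by
  simp [runMax, Finset.sup'_le_iff]

lemma runMax_mono (hst : s ≤ t) : runMax M s ω ≤ runMax M t ω :=
  runMax_le_iff.mpr fun _ hi => le_runMax (hi.trans hst)

lemma exists_eq_runMax (M : ℕ → Ω → ℝ) (t : ℕ) (ω : Ω) : ∃ i ≤ t, M i ω = runMax M t ω := by
  obtain ⟨i, hi, heq⟩ := Finset.exists_mem_eq_sup' (Finset.nonempty_range_iff.mpr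
    (Nat.succ_ne_zero t)) (fun i => M i ω)
  exact ⟨i, Nat.lt_succ_iff.mp (Finset.mem_range.mp hi), heq.symm⟩

end RunMax

lemma ayProc_eq_azemaYorFun {Ω : Type*} (g : ℝ → ℝ) (M : ℕ → Ω → ℝ) (t : ℕ) (ω : Ω) :
    ayProc g M t ω = azemaYorFun g (M t ω) (runMax M t ω) :=
  rfl

lemma runMax_ayProc {Ω : Type*} {M : ℕ → Ω → ℝ} {g : ℝ → ℝ} (hpos : ∀ t ω, 0 < runMax M t ω)
    (hmono : MonotoneOn g (Ioi 0))
    (hint : ∀ a ∈ Ioi (0 : ℝ), IntegrableOn (fun x => g x / x ^ 2) (Ioi a)) (t : ℕ) (ω : Ω) :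
    runMax (ayProc g M) t ω = calG g (runMax M t ω) := by
  refine le_antisymm (runMax_le_iff.mpr fun i hi => ?_) ?_
  · calc ayProc g M i ω ≤ calG g (runMax M i ω) :=
          azemaYorFun_le_calG hmono (hpos i ω) (le_runMax le_rfl)
      _ ≤ calG g (runMax M t ω) :=
          calG_monotoneOn hmono hint (hpos i ω) (hpos t ω) (runMax_mono hi)
  · obtain ⟨i, hi, hMi⟩ := exists_eq_runMax M t ω
    have hSi : runMax M i ω = runMax M t ω :=
      le_antisymm (runMax_mono hi) (hMi ▸ le_runMax le_rfl)
    calc calG g (runMax M t ω) = ayProc g M i ω := by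
          rw [ayProc_eq_azemaYorFun, hSi, hMi, azemaYorFun_self]
      _ ≤ runMax (ayProc g M) t ω := le_runMax hi

theorem stmt9_general {Ω : Type*} (M : ℕ → Ω → ℝ)
    (hnonneg : ∀ t ω, 0 ≤ M t ω)
    (hone : ∀ ω, M 0 ω = 1)
    (g : ℝ → ℝ)
    (hmono : MonotoneOn g (Set.Ioi 0))
    (hint : ∀ a ∈ Set.Ioi (0 : ℝ), IntegrableOn (fun x => g x / x ^ 2) (Set.Ioi a)) :
    ∀ t ω,
      g (runMax M t ω) ≤ ayProc g M t ω
      ∧ ayProc g M t ω ≤ calG g (runMax M t ω)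
      ∧ runMax (ayProc g M) t ω = calG g (runMax M t ω)
      ∧ (0 < M t ω → calG g (M t ω) ≤ ayProc g M t ω) := by
  have hpos : ∀ t ω, 0 < runMax M t ω := fun t ω =>
    zero_lt_one.trans_le (hone ω ▸ le_runMax (Nat.zero_le t))
  intro t ω
  have hMS : M t ω ≤ runMax M t ω := le_runMax le_rfl
  exact ⟨le_azemaYorFun hmono (hnonneg t ω) (hpos t ω) (hint _ (hpos t ω)),
    azemaYorFun_le_calG hmono (hpos t ω) hMS,
    runMax_ayProc hpos hmono hint t ω,
    fun hM => calG_le_azemaYorFun hmono hM hMS (hint _ hM)⟩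

/-- Pathwise: `g(S_t) ≤ Y_t ≤ 𝒢(S_t)`, `max_{s ≤ t} Y_s = 𝒢(S_t)`, and `𝒢(M_t) ≤ Y_t`
whenever `M_t > 0`. -/
theorem stmt9 {Ω : Type*} {m0 : MeasurableSpace Ω} {P : Measure Ω} [IsProbabilityMeasure P]
    (ℱ : Filtration ℕ m0) (M : ℕ → Ω → ℝ)
    (hsuper : Supermartingale M ℱ P) (hnonneg : ∀ t ω, 0 ≤ M t ω)
    (hone : ∀ ω, M 0 ω = 1)
    (g : ℝ → ℝ)
    (hg0 : ∀ x ∈ Set.Ioi (0 : ℝ), 0 ≤ g x)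
    (hmono : MonotoneOn g (Set.Ioi 0))
    (hint : ∀ a ∈ Set.Ioi (0 : ℝ), IntegrableOn (fun x => g x / x ^ 2) (Set.Ioi a)) :
    ∀ t ω,
      g (runMax M t ω) ≤ ayProc g M t ω
      ∧ ayProc g M t ω ≤ calG g (runMax M t ω)
      ∧ runMax (ayProc g M) t ω = calG g (runMax M t ω)
      ∧ (0 < M t ω → calG g (M t ω) ≤ ayProc g M t ω) :=
  stmt9_general M hnonneg hone g hmono hint
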